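/- arXiv:2103.13074 — 3 statements merged into one kernel-verified Lean document; each statement's English description precedes it below -/
import Mathlib

section
/- There exists a mixed-integer linear program (with at least one integer variable) such that the set B of binding constraints at its unique optimal solution is NOT an invariant constraint set; that is, the optimal value of the problem restricted to B is strictly smaller than the optimal value of the full problem. -/
/-- Mixed decision vector: `n` continuous and `q` integer variables. -/
abbrev MZ (n q : ℕ) := (Fin n → ℝ) × (Fin q → ℤ)

/-- Linear form on a mixed vector, with coefficients `ar` for the continuous part and
`ai` for the integer part. -/
def mdot {n q : ℕ} (ar : Fin n → ℝ) (ai : Fin q → ℝ) (z : MZ n q) : ℝ :=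
  (∑ i, ar i * z.1 i) + ∑ i, ai i * (z.2 i : ℝ)

/-- There exists a MILP (with at least one integer variable) with unique optimal solution
`zstar` such that the set of binding constraints at `zstar` is NOT an invariant constraint
set: the optimal value (infimum, in `EReal`) of the problem restricted to the binding
constraints is strictly smaller than the optimal value of the full problem. -/
theorem stmt2 : ∃ (n q m : ℕ) (a : Fin m → Fin n → ℝ) (a' : Fin m → Fin q → ℝ)
    (b : Fin m → ℝ) (cr : Fin n → ℝ) (ci : Fin q → ℝ) (zstar : MZ n q) (vJ : ℝ),
    1 ≤ q ∧
    (∀ j, mdot (a j) (a' j) zstar ≤ b j) ∧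
    IsLeast {v : ℝ | ∃ z : MZ n q,
      (∀ j, mdot (a j) (a' j) z ≤ b j) ∧ v = mdot cr ci z} vJ ∧
    mdot cr ci zstar = vJ ∧
    (∀ z : MZ n q, (∀ j, mdot (a j) (a' j) z ≤ b j) → mdot cr ci z = vJ → z = zstar) ∧
    sInf {v : EReal | ∃ z : MZ n q,
      (∀ j, mdot (a j) (a' j) zstar = b j → mdot (a j) (a' j) z ≤ b j) ∧
      v = ((mdot cr ci z : ℝ) : EReal)} < (vJ : EReal) := by
  refine ⟨0, 1, 1, fun _ _ => 0, fun _ _ => -1, fun _ => -1/2, fun _ => 0, fun _ => 1,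
    (fun i => i.elim0, fun _ => 1), 1, le_refl 1, ?_, ⟨?_, ?_⟩, ?_, ?_, ?_⟩
  · intro j
    simp [mdot]
    norm_num
  · exact ⟨(fun i => i.elim0, fun _ => 1), by intro j; simp [mdot]; norm_num,
      by simp [mdot]⟩
  · rintro v ⟨z, hz, rfl⟩
    have h := hz 0
    simp [mdot] at h ⊢
    have : (1 : ℝ) ≤ (z.2 0 : ℝ) := by
      have : (0 : ℤ) < z.2 0 := by
        by_contra hc
        push_neg at hc
        have : (z.2 0 : ℝ) ≤ 0 := by exact_mod_cast hc
        linarith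
      exact_mod_cast this
    linarith
  · simp [mdot]
  · rintro ⟨z1, z2⟩ hz hobj
    have h := hz 0
    simp [mdot] at h hobj
    refine Prod.ext (funext fun i => i.elim0) (funext fun i => ?_)
    have h1 : z2 0 = 1 := hobj
    have : i = 0 := Subsingleton.elim i 0
    simp [this, h1]
  · have hmem : ((0 : ℝ) : EReal) ∈ {v : EReal | ∃ z : MZ 0 1,
        (∀ j : Fin 1, mdot ((fun _ _ => 0 : Fin 1 → Fin 0 → ℝ) j)
            ((fun _ _ => -1 : Fin 1 → Fin 1 → ℝ) j)
            ((fun i => i.elim0, fun _ => 1) : MZ 0 1) = (fun _ => -1/2 : Fin 1 → ℝ) j →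
          mdot ((fun _ _ => 0 : Fin 1 → Fin 0 → ℝ) j)
            ((fun _ _ => -1 : Fin 1 → Fin 1 → ℝ) j) z ≤ (fun _ => -1/2 : Fin 1 → ℝ) j) ∧
        v = ((mdot (fun _ => 0) (fun _ => 1) z : ℝ) : EReal)} := by
      refine ⟨(fun i => i.elim0, fun _ => 0), ?_, by simp [mdot]⟩
      intro j hj
      exfalso
      simp [mdot] at hj
      norm_num at hj
    calc sInf _ ≤ ((0 : ℝ) : EReal) := sInf_le hmem
      _ < ((1 : ℝ) : EReal) := by norm_num
end

section
/- Consider the problem min (x − y) over x ∈ ℝ, y ∈ ℤ subject only to the binding constraint x ≥ 0.5 (the set B from the full problem). Its optimal value is −∞ (the problem is unbounded below), in particular strictly less than the optimal value −0.5 of the full problem with constraints x ≤ 1.5, y ≤ 1.75, x ≥ 0.5, x + y ≥ 1.3, y ≥ 0, y ≤ 2.25; hence B is not an invariant constraint set. -/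
/-- For `min (x - y)` over `x ∈ ℝ`, `y ∈ ℤ`, the reduced problem with only the binding
constraint `x ≥ 0.5` is unbounded below (optimal value `-∞` in `EReal`), in particular
strictly less than the optimal value `-0.5` of the full problem with all six constraints;
hence `B = {x ≥ 0.5}` is not an invariant constraint set. -/
theorem stmt5 :
    sInf {v : EReal | ∃ (x : ℝ) (y : ℤ),
      0.5 ≤ x ∧ v = ((x - (y : ℝ) : ℝ) : EReal)} = ⊥ ∧
    sInf {v : EReal | ∃ (x : ℝ) (y : ℤ),
      0.5 ≤ x ∧ v = ((x - (y : ℝ) : ℝ) : EReal)} < (((-0.5 : ℝ)) : EReal) ∧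
    IsLeast {v : ℝ | ∃ (x : ℝ) (y : ℤ), x ≤ 1.5 ∧ (y : ℝ) ≤ 1.75 ∧ 0.5 ≤ x ∧
      1.3 ≤ x + (y : ℝ) ∧ 0 ≤ y ∧ (y : ℝ) ≤ 2.25 ∧ v = x - (y : ℝ)} (-0.5) := by
  have hbot : sInf {v : EReal | ∃ (x : ℝ) (y : ℤ),
      0.5 ≤ x ∧ v = ((x - (y : ℝ) : ℝ) : EReal)} = ⊥ := by
    rw [sInf_eq_bot]
    intro b hb
    obtain ⟨r, hr⟩ : ∃ r : ℝ, (r : EReal) < b := by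
      induction b using EReal.rec with
      | bot => exact absurd hb (lt_irrefl _)
      | coe r => exact ⟨r - 1, by exact_mod_cast sub_one_lt r⟩
      | top => exact ⟨0, by simp⟩
    obtain ⟨n, hn⟩ := exists_int_gt (0.5 - r)
    refine ⟨((0.5 - (n : ℝ) : ℝ) : EReal), ⟨0.5, n, le_refl _, rfl⟩, ?_⟩
    calc ((0.5 - (n : ℝ) : ℝ) : EReal) < (r : EReal) := by
          exact_mod_cast by linarith
      _ < b := hr
  refine ⟨hbot, by rw [hbot]; exact bot_lt_iff_ne_bot.2 (by simp [EReal.coe_ne_bot]), ?_, ?_⟩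
  · exact ⟨0.5, 1, by norm_num⟩
  · rintro v ⟨x, y, h1, h2, h3, h4, h5, h6, rfl⟩
    have : y ≤ 1 := by
      by_contra h
      push_neg at h
      have : (2 : ℝ) ≤ (y : ℝ) := by exact_mod_cast h
      linarith
    have : (y : ℝ) ≤ 1 := by exact_mod_cast this
    linarith
end

section
/- In the mixed-integer program min{c^T z : a_j^T z ≤ b_j, j ∈ J, z ∈ ℝ^n × ℤ^q} with finite J, feasible and bounded with unique optimum z*, the family of invariant constraint sets containing the binding set B is nonempty (it contains J), but its minimal elements need not equal B: there exists an instance where every invariant constraint set strictly contains B. -/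
/-- Feasibility of `(x, y)` for the subset `S` of the six constraints of the toy MILP
`min (x - y)`, `x ∈ ℝ`, `y ∈ ℤ`: constraints are indexed `0 : x ≤ 1.5`, `1 : y ≤ 1.75`,
`2 : x ≥ 0.5`, `3 : x + y ≥ 1.3`, `4 : y ≥ 0`, `5 : y ≤ 2.25`. -/
def toyFeas (S : Set (Fin 6)) (x : ℝ) (y : ℤ) : Prop :=
  ((0 : Fin 6) ∈ S → x ≤ 1.5) ∧ ((1 : Fin 6) ∈ S → (y : ℝ) ≤ 1.75) ∧
  ((2 : Fin 6) ∈ S → 0.5 ≤ x) ∧ ((3 : Fin 6) ∈ S → 1.3 ≤ x + (y : ℝ)) ∧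
  ((4 : Fin 6) ∈ S → 0 ≤ y) ∧ ((5 : Fin 6) ∈ S → (y : ℝ) ≤ 2.25)

/-- Objective values of the toy MILP restricted to the constraint subset `S`. -/
def toyVal (S : Set (Fin 6)) : Set ℝ :=
  {v | ∃ (x : ℝ) (y : ℤ), toyFeas S x y ∧ v = x - (y : ℝ)}

lemma aux_y_le_one (y : ℤ) (h : (y : ℝ) ≤ 1.75) : (y : ℝ) ≤ 1 := by
  have h2 : (y : ℝ) < 2 := by linarith
  have : y < 2 := by exact_mod_cast h2
  exact_mod_cast Int.lt_add_one_iff.mp this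

/-- In the toy MILP, whose full problem (all six constraints) has optimal value `-0.5`
attained uniquely at `(0.5, 1)` with binding set `B = {2}` (i.e. `{x ≥ 0.5}`), the family
of invariant constraint sets containing `B` is nonempty (it contains the full set `J`),
but every invariant constraint set strictly contains `B`. -/
theorem stmt17 :
    IsLeast (toyVal Set.univ) (-0.5) ∧
    (∀ (x : ℝ) (y : ℤ), toyFeas Set.univ x y → x - (y : ℝ) = -0.5 → x = 0.5 ∧ y = 1) ∧
    (∃ S : Set (Fin 6), ({2} : Set (Fin 6)) ⊆ S ∧ IsLeast (toyVal S) (-0.5)) ∧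
    (∀ S : Set (Fin 6), IsLeast (toyVal S) (-0.5) → ({2} : Set (Fin 6)) ⊂ S) := by
  have hleast : IsLeast (toyVal Set.univ) (-0.5) := by
    constructor
    · exact ⟨0.5, 1, by constructor <;> norm_num [toyFeas], by norm_num⟩
    · rintro v ⟨x, y, ⟨h0, h1, h2, h3, h4, h5⟩, rfl⟩
      have hy := aux_y_le_one y (h1 trivial)
      have hx := h2 trivial
      linarith
  refine ⟨hleast, ?_, ⟨Set.univ, Set.subset_univ _, hleast⟩, ?_⟩
  · rintro x y ⟨h0, h1, h2, h3, h4, h5⟩ hval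
    have hy := aux_y_le_one y (h1 trivial)
    have hx := h2 trivial
    have hx5 : x = 0.5 := by linarith
    have hy1 : (y : ℝ) = 1 := by linarith
    exact ⟨hx5, by exact_mod_cast hy1⟩
  · rintro S ⟨hmem, hlb⟩
    have h2S : (2 : Fin 6) ∈ S := by
      by_contra h2
      -- point (0.3, 1) satisfies all constraints except 2, value -0.7
      have : (-0.7 : ℝ) ∈ toyVal S := by
        refine ⟨0.3, 1, ⟨fun _ => by norm_num, fun _ => by norm_num,
          fun h => absurd h h2, fun _ => by norm_num, fun _ => by norm_num,
          fun _ => by norm_num⟩, by norm_num⟩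
      have := hlb this
      linarith
    refine ⟨by simpa using h2S, ?_⟩
    intro hSub
    -- if S ⊆ {2}, point (0.5, 2) is feasible with value -1.5
    have : (-1.5 : ℝ) ∈ toyVal S := by
      refine ⟨0.5, 2, ?_, by norm_num⟩
      exact ⟨fun _ => by norm_num, fun h => absurd (hSub h) (by simp),
        fun _ => le_refl _, fun _ => by norm_num, fun _ => by norm_num,
        fun _ => by norm_num⟩
    have := hlb this
    linarith
end
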